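/- Advantage approximation bound: For any policy π of a finite discounted MDP and any function f : S×A → ℝ, defining f̄(s,a) = f(s,a) − E_{a'∼π(·|s)}[f(s,a')], one has E_{(s,a)∼d^π}[(f̄(s,a) − A^π(s,a))²] ≤ 4 · E_{(s,a)∼d^π}[(f(s,a) − Q^π(s,a))²]. -/

import Mathlib

open Finset

structure FinMDP (S A : Type*) [Fintype S] [Fintype A] where
  P : S → A → S → ℝ
  P_nonneg : ∀ s a s', 0 ≤ P s a s'
  P_sum : ∀ s a, ∑ s', P s a s' = 1
  r : S → A → ℝ
  r_nonneg : ∀ s a, 0 ≤ r s a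
  r_le_one : ∀ s a, r s a ≤ 1
  disc : ℝ
  disc_pos : 0 < disc
  disc_lt_one : disc < 1
  init : S → ℝ
  init_nonneg : ∀ s, 0 ≤ init s
  init_sum : ∑ s, init s = 1

variable {S A : Type*} [Fintype S] [Fintype A] [Nonempty S] [Nonempty A]

/-- A policy assigns to each state a probability mass function over actions. -/
def IsPolicy (π : S → A → ℝ) : Prop :=
  (∀ s a, 0 ≤ π s a) ∧ ∀ s, ∑ a, π s a = 1

/-- The Bellman operator `T^π`. -/
noncomputable def FinMDP.bellman (M : FinMDP S A) (π f : S → A → ℝ) (s : S) (a : A) : ℝ :=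
  M.r s a + M.disc * ∑ s', M.P s a s' * ∑ a', π s' a' * f s' a'

/-- `Q` is the action-value function of `π`, i.e. satisfies the Bellman equation. -/
def FinMDP.IsQ (M : FinMDP S A) (π Q : S → A → ℝ) : Prop :=
  ∀ s a, Q s a = M.bellman π Q s a

/-- The state value `V^π(s)` induced by a `Q`-function. -/
noncomputable def vOf (π Q : S → A → ℝ) (s : S) : ℝ := ∑ a, π s a * Q s a

/-- The scalar value `V^π = E_{s ∼ μ₀}[V^π(s)]`. -/
noncomputable def FinMDP.scalarV (M : FinMDP S A) (π Q : S → A → ℝ) : ℝ :=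
  ∑ s, M.init s * vOf π Q s

/-- Distribution of the state at time `t` under policy `π`. -/
noncomputable def FinMDP.stateDist (M : FinMDP S A) (π : S → A → ℝ) : ℕ → S → ℝ
  | 0 => M.init
  | (t + 1) => fun s' => ∑ s, ∑ a, FinMDP.stateDist M π t s * π s a * M.P s a s'

/-- The discounted occupancy measure `d^π(s,a) = (1-γ) ∑_t γ^t Pr^π(s_t = s, a_t = a)`. -/
noncomputable def FinMDP.occ (M : FinMDP S A) (π : S → A → ℝ) (s : S) (a : A) : ℝ :=
  (1 - M.disc) * ∑' t : ℕ, M.disc ^ t * M.stateDist π t s * π s a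

/-! Centring under `π(·|s)` is linear, so `f̄ - A^π` is the centred error `g - E_π g` with
`g = f - Q`. As `d^π(s, a) = d^π(s) π(a|s)`, the left-hand side is a `d^π`-average over states
of the `π(·|s)`-variance of `g`, which is at most its second moment; the factor `4` is slack. -/

theorem Finset.sum_mul_sub_weighted_mean_sq {ι : Type*} (s : Finset ι) (p g : ι → ℝ)
    (hp : ∑ i ∈ s, p i = 1) :
    ∑ i ∈ s, p i * (g i - ∑ j ∈ s, p j * g j) ^ 2
      = ∑ i ∈ s, p i * g i ^ 2 - (∑ j ∈ s, p j * g j) ^ 2 := by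
  set m := ∑ j ∈ s, p j * g j
  rw [Finset.sum_congr rfl fun i _ => show p i * (g i - m) ^ 2
      = p i * g i ^ 2 - 2 * m * (p i * g i) + m ^ 2 * p i by ring,
    Finset.sum_add_distrib, Finset.sum_sub_distrib, ← Finset.mul_sum, ← Finset.mul_sum, hp]
  ring

theorem Finset.sum_mul_sub_weighted_mean_sq_le {ι : Type*} (s : Finset ι) (p g : ι → ℝ)
    (hp : ∑ i ∈ s, p i = 1) :
    ∑ i ∈ s, p i * (g i - ∑ j ∈ s, p j * g j) ^ 2 ≤ ∑ i ∈ s, p i * g i ^ 2 := by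
  rw [Finset.sum_mul_sub_weighted_mean_sq s p g hp]
  exact sub_le_self _ (sq_nonneg _)

namespace FinMDP

noncomputable def stateOcc (M : FinMDP S A) (π : S → A → ℝ) (s : S) : ℝ :=
  (1 - M.disc) * ∑' t : ℕ, M.disc ^ t * M.stateDist π t s

omit [Nonempty S] [Nonempty A] in
theorem occ_eq_stateOcc_mul (M : FinMDP S A) (π : S → A → ℝ) (s : S) (a : A) :
    M.occ π s a = M.stateOcc π s * π s a := by
  rw [occ, stateOcc, mul_assoc, ← tsum_mul_right]

omit [Nonempty S] [Nonempty A] in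
theorem stateDist_nonneg (M : FinMDP S A) {π : S → A → ℝ} (hπ : ∀ s a, 0 ≤ π s a) (t : ℕ)
    (s : S) : 0 ≤ M.stateDist π t s := by
  induction t generalizing s with
  | zero => exact M.init_nonneg s
  | succ t ih =>
    exact Finset.sum_nonneg fun s' _ => Finset.sum_nonneg fun a _ =>
      mul_nonneg (mul_nonneg (ih s') (hπ s' a)) (M.P_nonneg s' a s)

omit [Nonempty S] [Nonempty A] in
theorem stateOcc_nonneg (M : FinMDP S A) {π : S → A → ℝ} (hπ : ∀ s a, 0 ≤ π s a) (s : S) :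
    0 ≤ M.stateOcc π s :=
  mul_nonneg (sub_nonneg.2 M.disc_lt_one.le)
    (tsum_nonneg fun t => mul_nonneg (pow_nonneg M.disc_pos.le t) (M.stateDist_nonneg hπ t s))

omit [Nonempty S] [Nonempty A] in
theorem occ_nonneg (M : FinMDP S A) {π : S → A → ℝ} (hπ : ∀ s a, 0 ≤ π s a) (s : S) (a : A) :
    0 ≤ M.occ π s a := by
  rw [occ_eq_stateOcc_mul]
  exact mul_nonneg (M.stateOcc_nonneg hπ s) (hπ s a)

omit [Nonempty S] [Nonempty A] in
theorem sum_occ_mul_centered_sub_sq_le (M : FinMDP S A) {π : S → A → ℝ} (hπ : IsPolicy π)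
    (Q f : S → A → ℝ) :
    ∑ s, ∑ a, M.occ π s a * ((f s a - vOf π f s) - (Q s a - vOf π Q s)) ^ 2
      ≤ ∑ s, ∑ a, M.occ π s a * (f s a - Q s a) ^ 2 := by
  refine Finset.sum_le_sum fun s _ => ?_
  have hcentred : ∀ a, (f s a - vOf π f s) - (Q s a - vOf π Q s)
      = (f s a - Q s a) - ∑ a', π s a' * (f s a' - Q s a') := by
    intro a
    simp only [vOf, mul_sub, Finset.sum_sub_distrib]
    ring
  simp only [hcentred, occ_eq_stateOcc_mul, mul_assoc, ← Finset.mul_sum]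
  exact mul_le_mul_of_nonneg_left
    (Finset.sum_mul_sub_weighted_mean_sq_le _ _ _ (hπ.2 s)) (M.stateOcc_nonneg hπ.1 s)

end FinMDP

theorem stmt9_general (M : FinMDP S A) (π Q f : S → A → ℝ) (hπ : IsPolicy π) :
    ∑ s, ∑ a, M.occ π s a *
        ((f s a - ∑ a', π s a' * f s a') - (Q s a - vOf π Q s)) ^ 2
      ≤ 4 * ∑ s, ∑ a, M.occ π s a * (f s a - Q s a) ^ 2 := by
  have herr_nonneg : 0 ≤ ∑ s, ∑ a, M.occ π s a * (f s a - Q s a) ^ 2 :=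
    Finset.sum_nonneg fun s _ => Finset.sum_nonneg fun a _ =>
      mul_nonneg (M.occ_nonneg hπ.1 s a) (sq_nonneg _)
  calc _ ≤ ∑ s, ∑ a, M.occ π s a * (f s a - Q s a) ^ 2 :=
        M.sum_occ_mul_centered_sub_sq_le hπ Q f
    _ ≤ 4 * ∑ s, ∑ a, M.occ π s a * (f s a - Q s a) ^ 2 :=
        le_mul_of_one_le_left herr_nonneg (by norm_num)

/-- Advantage approximation bound. -/
theorem stmt9 (M : FinMDP S A) (π Q f : S → A → ℝ) (hπ : IsPolicy π) (hQ : M.IsQ π Q) :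
    ∑ s, ∑ a, M.occ π s a *
        ((f s a - ∑ a', π s a' * f s a') - (Q s a - vOf π Q s)) ^ 2
      ≤ 4 * ∑ s, ∑ a, M.occ π s a * (f s a - Q s a) ^ 2 :=
  stmt9_general M π Q f hπ
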